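/- arXiv:1712.04228 — 6 statements merged into one kernel-verified Lean document; each statement's English description precedes it below -/
import Mathlib

section
/- Let G be a finite simple graph and let U = {u_1, …, u_k} be a set of vertices that forces a unique perfect matching in G. Then G has a unique perfect matching, namely M = {u_1v_1, …, u_kv_k}, where for each i ∈ {1,…,k} the vertex v_i is the unique neighbor of u_i in the graph G_i obtained from G by deleting the closed neighborhoods of u_1, …, u_{i−1}. -/
/-- A set (listed as `u 0, …, u (k-1)`, all distinct) forces a unique perfect matching
in `G` if `|V| = 2k` and every `u i` has degree exactly one in the graph `G_i` obtained
from `G` by deleting the closed neighborhoods of `u 0, …, u (i-1)`. -/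
def ForcesUPM {V : Type*} [Fintype V] (G : SimpleGraph V) (k : ℕ) (u : Fin k → V) : Prop :=
  Function.Injective u ∧ Fintype.card V = 2 * k ∧
  ∀ i : Fin k,
    (∀ j : Fin k, j < i → u i ∉ insert (u j) (G.neighborSet (u j))) ∧
    ∃! w : V, (∀ j : Fin k, j < i → w ∉ insert (u j) (G.neighborSet (u j))) ∧ G.Adj (u i) w

/-!
Order the pairs `(u i, v i)` as in the forcing sequence: each `u i` and `v i` lies outside the
closed neighbourhoods of the earlier `u j`. Then `u` and `v` are disjoint injective listings, so by
counting they exhaust the `2k` vertices. In a perfect matching `M`, by induction on `i`, the partner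
of `u i` can be neither `u m` nor `v m` with `m < i` (those are already matched to each other), nor
`u m` or `v m` with `m > i` (they are not adjacent to `u i`); so it is `v i`. Hence every perfect
matching is `{u i v i}`, and this set is one.
-/

namespace SimpleGraph

variable {ι V : Type*} {G : SimpleGraph V}

/-- The name refers to the biadjacency between `u` and `v`: `u j` is adjacent to `v i` only if
`i ≤ j`, with all diagonal entries present. -/
structure IsTriangularPairing [LinearOrder ι] (G : SimpleGraph V) (u v : ι → V) : Prop where
  adj : ∀ i, G.Adj (u i) (v i)
  u_ne : ∀ ⦃i j⦄, j < i → u i ≠ u j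
  not_adj_u : ∀ ⦃i j⦄, j < i → ¬ G.Adj (u j) (u i)
  v_ne : ∀ ⦃i j⦄, j < i → v i ≠ u j
  not_adj_v : ∀ ⦃i j⦄, j < i → ¬ G.Adj (u j) (v i)

namespace Subgraph

theorem exists_isPerfectMatching_of_bijective_sumElim {u v : ι → V}
    (h : Function.Bijective (Sum.elim u v)) (hadj : ∀ i, G.Adj (u i) (v i)) :
    ∃ M : G.Subgraph, M.IsPerfectMatching := by
  have hu : Function.Injective u := h.1.comp Sum.inl_injective
  have hv : Function.Injective v := h.1.comp Sum.inr_injective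
  have hdisj : Disjoint (Set.range u) (Set.range v) := by
    rw [Set.disjoint_range_iff]
    exact fun i j hij => Sum.inl_ne_inr (h.1 hij)
  obtain ⟨M, hverts, hM⟩ := IsMatching.exists_of_disjoint_sets_of_equiv hdisj
    ((Equiv.ofInjective u hu).symm.trans (Equiv.ofInjective v hv))
    (by rintro ⟨_, i, rfl⟩; simpa using hadj i)
  refine ⟨M, hM, fun a => ?_⟩
  rw [hverts, ← Set.Sum.elim_range, h.2.range_eq]
  trivial

theorem IsPerfectMatching.eq_of_forall_exists_common_adj {M M' : G.Subgraph}
    (hM : M.IsPerfectMatching) (hM' : M'.IsPerfectMatching)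
    (h : ∀ a, ∃ b, M.Adj a b ∧ M'.Adj a b) : M = M' := by
  ext a c
  · exact iff_of_true (hM.2 a) (hM'.2 a)
  · obtain ⟨b, hb, hb'⟩ := h a
    constructor
    · intro hc
      rwa [hM.1.eq_of_adj_left hc hb]
    · intro hc
      rwa [hM'.1.eq_of_adj_left hc hb']

end Subgraph

namespace IsTriangularPairing

variable [LinearOrder ι] {u v : ι → V}

theorem u_injective (hT : G.IsTriangularPairing u v) : Function.Injective u := by
  intro i j hij
  rcases lt_trichotomy i j with hlt | heq | hgt
  · exact absurd hij.symm (hT.u_ne hlt)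
  · exact heq
  · exact absurd hij (hT.u_ne hgt)

theorem v_ne_u (hT : G.IsTriangularPairing u v) (i j : ι) : v i ≠ u j := by
  rcases lt_trichotomy j i with hlt | rfl | hgt
  · exact hT.v_ne hlt
  · exact (hT.adj j).ne'
  · intro hij
    exact hT.not_adj_u hgt (hij ▸ hT.adj i)

theorem v_injective (hT : G.IsTriangularPairing u v) : Function.Injective v := by
  intro i j hij
  rcases lt_trichotomy i j with hlt | heq | hgt
  · exact absurd (hij ▸ hT.adj i) (hT.not_adj_v hlt)
  · exact heq
  · exact absurd (hij ▸ hT.adj j) (hT.not_adj_v hgt)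

theorem bijective_sumElim [Fintype ι] [Fintype V] (hT : G.IsTriangularPairing u v)
    (hcard : Fintype.card V = 2 * Fintype.card ι) : Function.Bijective (Sum.elim u v) := by
  have hinj : Function.Injective (Sum.elim u v) :=
    hT.u_injective.sumElim hT.v_injective fun i j => (hT.v_ne_u j i).symm
  refine (Fintype.bijective_iff_injective_and_card _).2 ⟨hinj, ?_⟩
  rw [Fintype.card_sum, hcard, two_mul]

theorem adj_of_isPerfectMatching [WellFoundedLT ι] (hT : G.IsTriangularPairing u v)
    (hsurj : Function.Surjective (Sum.elim u v)) {M : G.Subgraph} (hM : M.IsPerfectMatching)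
    (i : ι) : M.Adj (u i) (v i) := by
  induction i using WellFoundedLT.induction with
  | _ i IH =>
    obtain ⟨w, hw, -⟩ := hM.1 (hM.2 (u i))
    obtain ⟨m | m, rfl⟩ := hsurj w
    · exfalso
      rcases lt_trichotomy m i with hlt | rfl | hgt
      · exact hT.v_ne_u m i (hM.1.eq_of_adj_left (IH m hlt) hw.symm)
      · exact (M.adj_sub hw).ne rfl
      · exact hT.not_adj_u hgt (M.adj_sub hw)
    · rcases lt_trichotomy m i with hlt | rfl | hgt
      · exact absurd (hM.1.eq_of_adj_right (IH m hlt) hw) (hT.u_ne hlt).symm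
      · exact hw
      · exact absurd (M.adj_sub hw) (hT.not_adj_v hgt)

theorem eq_of_isPerfectMatching [WellFoundedLT ι] (hT : G.IsTriangularPairing u v)
    (hsurj : Function.Surjective (Sum.elim u v)) {M M' : G.Subgraph}
    (hM : M.IsPerfectMatching) (hM' : M'.IsPerfectMatching) : M = M' := by
  refine hM.eq_of_forall_exists_common_adj hM' fun a => ?_
  obtain ⟨i | i, rfl⟩ := hsurj a
  · exact ⟨v i, hT.adj_of_isPerfectMatching hsurj hM i, hT.adj_of_isPerfectMatching hsurj hM' i⟩
  · exact ⟨u i, (hT.adj_of_isPerfectMatching hsurj hM i).symm,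
      (hT.adj_of_isPerfectMatching hsurj hM' i).symm⟩

end IsTriangularPairing

end SimpleGraph

theorem forces_unique_perfect_matching {V : Type*} [Fintype V] (G : SimpleGraph V)
    (k : ℕ) (u : Fin k → V) (hU : ForcesUPM G k u) (v : Fin k → V)
    (hv : ∀ i : Fin k,
      (∀ j : Fin k, j < i → v i ∉ insert (u j) (G.neighborSet (u j))) ∧ G.Adj (u i) (v i)) :
    (∃! M : G.Subgraph, M.IsPerfectMatching) ∧
      ∀ M : G.Subgraph, M.IsPerfectMatching → ∀ i : Fin k, M.Adj (u i) (v i) := by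
  obtain ⟨-, hcard, hstep⟩ := hU
  have hT : G.IsTriangularPairing u v :=
    { adj := fun i => (hv i).2
      u_ne := fun i j hji he => (hstep i).1 j hji (.inl he)
      not_adj_u := fun i j hji ha => (hstep i).1 j hji (.inr ha)
      v_ne := fun i j hji he => (hv i).1 j hji (.inl he)
      not_adj_v := fun i j hji ha => (hv i).1 j hji (.inr ha) }
  have hbij := hT.bijective_sumElim (by rw [hcard, Fintype.card_fin])
  obtain ⟨M₀, hM₀⟩ := SimpleGraph.Subgraph.exists_isPerfectMatching_of_bijective_sumElim hbij hT.adj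
  exact ⟨⟨M₀, hM₀, fun M hM => hT.eq_of_isPerfectMatching hbij.2 hM hM₀⟩,
    fun M hM => hT.adj_of_isPerfectMatching hbij.2 hM⟩
end

section
/- A cograph G has a unique perfect matching if and only if some set of vertices forces a unique perfect matching in G. -/
/-- A cograph is a graph with no induced path on four vertices. -/
def IsCograph {V : Type*} (G : SimpleGraph V) : Prop :=
  ¬ ∃ f : Fin 4 → V, Function.Injective f ∧
      ∀ i j : Fin 4, G.Adj (f i) (f j) ↔ (SimpleGraph.pathGraph 4).Adj i j

/-!
Write `σ` for the partner map of the unique perfect matching of a cograph `G`. Uniqueness forbids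
alternating 4-cycles: if `a ~ c` and `σ a ~ σ c` for distinct matching edges, exchanging them gives
a second perfect matching. Together with the absence of induced `P₄`s this makes "`z` is adjacent
to both `x` and `σ x`" a strict partial order on the vertices. If no vertex had degree one, every
vertex would have such a `z` above it, which is impossible in a finite set. So some `u` has a
single neighbour `w`; every perfect matching uses the edge `uw`, and deleting `u` and `w` preserves
both uniqueness of the perfect matching and the cograph property. By induction this produces a
forcing sequence. Conversely, the first vertex of a forcing sequence is such a pendant vertex, and
the same deletion shows by induction that the perfect matching is unique.
-/

open Function SimpleGraph

section

variable {V : Type*} {G : SimpleGraph V}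

theorem existsUnique_subtype_iff {α : Type*} {s : Set α} {p : α → Prop} :
    (∃! x : s, p x) ↔ ∃! x, x ∈ s ∧ p x :=
  ⟨fun ⟨x, hx, h⟩ => ⟨x, ⟨x.2, hx⟩, fun y hy => congrArg Subtype.val (h ⟨y, hy.1⟩ hy.2)⟩,
    fun ⟨x, hx, h⟩ => ⟨⟨x, hx.1⟩, hx.2, fun y hy => Subtype.ext (h y ⟨y.2, hy⟩)⟩⟩

theorem card_compl_pair_add_two [Fintype V] {u w : V} (huw : u ≠ w)
    [Fintype ↥({u, w} : Set V)ᶜ] : Fintype.card ↥({u, w} : Set V)ᶜ + 2 = Fintype.card V := by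
  rw [← Nat.card_eq_fintype_card, ← Nat.card_eq_fintype_card, Nat.card_coe_set_eq,
    ← Set.ncard_pair huw, add_comm, Set.ncard_add_ncard_compl]

theorem IsCograph.induce (hG : IsCograph G) (s : Set V) : IsCograph (G.induce s) := by
  rintro ⟨f, hf, hadj⟩
  exact hG ⟨fun i => f i, Subtype.val_injective.comp hf, hadj⟩

theorem IsCograph.false_of_inducedPath (hG : IsCograph G) {a b c d : V}
    (hab : G.Adj a b) (hbc : G.Adj b c) (hcd : G.Adj c d)
    (hac : ¬G.Adj a c) (hbd : ¬G.Adj b d) (had : ¬G.Adj a d) : False := by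
  -- the non-edges already force the four vertices to be distinct
  have : a ≠ c := by rintro rfl; exact had hcd
  have : b ≠ d := by rintro rfl; exact had hab
  have : a ≠ d := by rintro rfl; exact hac hcd.symm
  refine hG ⟨![a, b, c, d], fun i j h => ?_, fun i j => ?_⟩
  · fin_cases i <;> fin_cases j <;>
      simp_all [hab.ne, hbc.ne, hcd.ne, hab.ne.symm, hbc.ne.symm, hcd.ne.symm]
  · fin_cases i <;> fin_cases j <;>
      simp_all [pathGraph_adj, hab.symm, hbc.symm, hcd.symm, G.adj_comm]

namespace SimpleGraph

section Pairing

variable {σ : V → V}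

structure IsPairing (G : SimpleGraph V) (σ : V → V) : Prop where
  involutive : Involutive σ
  adj : ∀ v, G.Adj v (σ v)

def IsPairing.toSubgraph (hσ : G.IsPairing σ) : G.Subgraph where
  verts := Set.univ
  Adj x y := σ x = y
  adj_sub := by rintro x _ rfl; exact hσ.adj x
  edge_vert _ := trivial
  symm := ⟨by rintro x _ rfl; exact hσ.involutive x⟩

theorem IsPairing.isPerfectMatching_toSubgraph (hσ : G.IsPairing σ) :
    hσ.toSubgraph.IsPerfectMatching :=
  Subgraph.isPerfectMatching_iff.2 fun v => ⟨σ v, rfl, fun _ h => Eq.symm h⟩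

theorem Subgraph.IsPerfectMatching.exists_isPairing {M : G.Subgraph} (hM : M.IsPerfectMatching) :
    ∃ σ, G.IsPairing σ ∧ ∀ v, M.Adj v (σ v) := by
  choose σ hσ using Subgraph.isPerfectMatching_iff.1 hM
  exact ⟨σ, ⟨fun v => ((hσ (σ v)).2 v (hσ v).1.symm).symm, fun v => M.adj_sub (hσ v).1⟩,
    fun v => (hσ v).1⟩

theorem existsUnique_isPairing_of_existsUnique_isPerfectMatching
    (h : ∃! M : G.Subgraph, M.IsPerfectMatching) : ∃! σ, G.IsPairing σ := by
  obtain ⟨M, hM, huniq⟩ := h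
  obtain ⟨σ, hσ, hMσ⟩ := hM.exists_isPairing
  refine ⟨σ, hσ, fun τ hτ => funext fun v => ?_⟩
  have hv : M.Adj v (τ v) := huniq _ hτ.isPerfectMatching_toSubgraph ▸ rfl
  exact hM.1.eq_of_adj_left hv (hMσ v)

/-- `τ = σ ∘ (a (σ c)) ∘ ((σ a) c)` trades the pairs `{a, σ a}`, `{c, σ c}` for `{a, c}`,
`{σ a, σ c}`; it is an involution because conjugating by `σ` exchanges the two transpositions. -/
theorem IsPairing.exists_swap (hσ : G.IsPairing σ) {a c : V} (hac : G.Adj a c)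
    (hσac : G.Adj (σ a) (σ c)) : ∃ τ, G.IsPairing τ ∧ τ a = c := by
  classical
  have hinv := hσ.involutive
  have hσa : σ a ≠ a := (hσ.adj a).ne'
  have hσc : σ c ≠ c := (hσ.adj c).ne'
  refine ⟨fun x => σ (Equiv.swap a (σ c) (Equiv.swap (σ a) c x)), ⟨fun x => ?_, fun x => ?_⟩, ?_⟩
  · simp only [hinv.injective.map_swap, hinv _, Equiv.swap_apply_self]
  · rw [Equiv.swap_apply_def (σ a)]
    split_ifs with hx hx'
    · rw [hx, Equiv.swap_apply_of_ne_of_ne hac.ne' hσc.symm]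
      exact hσac
    · rw [hx', Equiv.swap_apply_of_ne_of_ne hσa (hinv.injective.ne hac.ne), hinv]
      exact hac.symm
    · rw [Equiv.swap_apply_def]
      split_ifs with hxa hxσc
      · rw [hxa, hinv]
        exact hac
      · rw [hxσc]
        exact hσac.symm
      · exact hσ.adj x
  · simp only [Equiv.swap_apply_of_ne_of_ne hσa.symm hac.ne, Equiv.swap_apply_left, hinv _]

structure IsRigidPairing (G : SimpleGraph V) (σ : V → V) : Prop extends G.IsPairing σ where
  not_adj : ∀ ⦃a c⦄, G.Adj a c → c ≠ σ a → ¬G.Adj (σ a) (σ c)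

theorem IsPairing.isRigidPairing (hσ : G.IsPairing σ) (huniq : ∀ τ, G.IsPairing τ → τ = σ) :
    G.IsRigidPairing σ where
  toIsPairing := hσ
  not_adj a c hac hc hσac := by
    obtain ⟨τ, hτ, hτa⟩ := hσ.exists_swap hac hσac
    exact hc (hτa ▸ congrFun (huniq τ hτ) a)

def DominatesPair (G : SimpleGraph V) (σ : V → V) (a c : V) : Prop :=
  G.Adj a c ∧ G.Adj a (σ c)

namespace IsRigidPairing

variable {a c e : V}

theorem not_adj_partner_of_dominatesPair (hσ : G.IsRigidPairing σ) (h : G.DominatesPair σ a c) :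
    ¬G.Adj (σ a) c ∧ ¬G.Adj (σ a) (σ c) := by
  obtain ⟨hac, haσc⟩ := h
  have hc : c ≠ σ a := by rintro rfl; exact G.irrefl (hσ.involutive a ▸ haσc)
  have hσc : σ c ≠ σ a := hσ.involutive.injective.ne hac.ne'
  exact ⟨hσ.involutive c ▸ hσ.not_adj haσc hσc, hσ.not_adj hac hc⟩

theorem dominatesPair_or_dominatesPair (hσ : G.IsRigidPairing σ) (hG : IsCograph G)
    (hac : G.Adj a c) (hc : c ≠ σ a) : G.DominatesPair σ a c ∨ G.DominatesPair σ c a := by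
  by_contra! h
  have haσc : ¬G.Adj a (σ c) := fun h' => h.1 ⟨hac, h'⟩
  have hcσa : ¬G.Adj c (σ a) := fun h' => h.2 ⟨hac.symm, h'⟩
  exact hG.false_of_inducedPath (hσ.adj a).symm hac (hσ.adj c) (fun h' => hcσa h'.symm) haσc
    (hσ.not_adj hac hc)

theorem not_dominatesPair_partner (hσ : G.IsRigidPairing σ) (hG : IsCograph G)
    (hac : G.DominatesPair σ a c) : ¬G.DominatesPair σ (σ a) e := by
  intro hae
  obtain ⟨hσac, hσaσc⟩ := hσ.not_adj_partner_of_dominatesPair hac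
  obtain ⟨hae', haσe⟩ := hσ.not_adj_partner_of_dominatesPair hae
  rw [hσ.involutive a] at hae' haσe
  by_cases hce : G.Adj c e
  · have heσc : e ≠ σ c := G.ne_of_adj_of_not_adj hae.1.symm fun h => hσaσc h.symm
    exact hG.false_of_inducedPath hac.2.symm (hσ.adj a) hae.2 (fun h => hσaσc h.symm) haσe
      (hσ.not_adj hce heσc)
  · exact hG.false_of_inducedPath hac.1.symm (hσ.adj a) hae.1 (fun h => hσac h.symm) hae' hce

theorem dominatesPair_trans (hσ : G.IsRigidPairing σ) (hG : IsCograph G)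
    (hac : G.DominatesPair σ a c) (hce : G.DominatesPair σ c e) : G.DominatesPair σ a e := by
  obtain ⟨hσac, hσaσc⟩ := hσ.not_adj_partner_of_dominatesPair hac
  obtain ⟨hσce, -⟩ := hσ.not_adj_partner_of_dominatesPair hce
  have hea : e ≠ a := by rintro rfl; exact hσac hce.2.symm
  have heσa : e ≠ σ a := G.ne_of_adj_of_not_adj hce.1.symm hσac
  have not_dom : ¬G.DominatesPair σ e a := fun ⟨_, heσa'⟩ =>
    hG.false_of_inducedPath (hσ.adj c).symm hce.1 heσa' hσce (fun h => hσac h.symm)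
      (fun h => hσaσc h.symm)
  have hadj : G.Adj a e ∨ G.Adj (σ a) e := by
    by_contra! h
    exact hG.false_of_inducedPath hce.1.symm hac.1.symm (hσ.adj a) (fun h' => h.1 h'.symm)
      (fun h' => hσac h'.symm) (fun h' => h.2 h'.symm)
  rcases hadj with hae | hσae
  · exact (hσ.dominatesPair_or_dominatesPair hG hae heσa).resolve_right not_dom
  · rcases hσ.dominatesPair_or_dominatesPair hG hσae (by rwa [hσ.involutive a]) with h | h
    · exact (hσ.not_dominatesPair_partner hG hac h).elim
    · exact (not_dom ⟨hσ.involutive a ▸ h.2, h.1⟩).elim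

theorem exists_dominatesPair (hσ : G.IsRigidPairing σ) (hG : IsCograph G)
    (hdeg : ∀ v, ∃ y, G.Adj v y ∧ y ≠ σ v) (x : V) : ∃ z, G.DominatesPair σ z x := by
  obtain ⟨y, hxy, hy⟩ := hdeg x
  rcases hσ.dominatesPair_or_dominatesPair hG hxy hy with hx | hy
  · obtain ⟨y', hσxy', hy'⟩ := hdeg (σ x)
    rcases hσ.dominatesPair_or_dominatesPair hG hσxy' hy' with h | h
    · exact (hσ.not_dominatesPair_partner hG hx h).elim
    · exact ⟨y', hσ.involutive x ▸ h.2, h.1⟩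
  · exact ⟨y, hy⟩

theorem exists_neighborSet_eq_singleton [Finite V] [Nonempty V] (hσ : G.IsRigidPairing σ)
    (hG : IsCograph G) : ∃ v, G.neighborSet v = {σ v} := by
  by_contra! h
  have hdeg (v : V) : ∃ y, G.Adj v y ∧ y ≠ σ v := by
    by_contra! h'
    exact h v (Set.eq_singleton_iff_unique_mem.2 ⟨hσ.adj v, h'⟩)
  have : IsTrans V (G.DominatesPair σ) := ⟨fun _ _ _ => hσ.dominatesPair_trans hG⟩
  have : Std.Irrefl (G.DominatesPair σ) := ⟨fun _ h => G.irrefl h.1⟩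
  obtain ⟨x, -, hx⟩ := (Finite.wellFounded_of_trans_of_irrefl (G.DominatesPair σ)).has_min
    Set.univ Set.univ_nonempty
  obtain ⟨z, hz⟩ := hσ.exists_dominatesPair hG hdeg x
  exact hx z trivial hz

end IsRigidPairing

end Pairing

section Pendant

variable {u w : V}

theorem adj_of_neighborSet_eq_singleton (hu : G.neighborSet u = {w}) : G.Adj u w :=
  show w ∈ G.neighborSet u from hu ▸ rfl

theorem mem_insert_neighborSet_induce {s : Set V} (x y : s) :
    (x : V) ∈ insert (y : V) (G.neighborSet y) ↔ x ∈ insert y ((G.induce s).neighborSet y) := by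
  simp [Subtype.ext_iff]

namespace Subgraph.IsPerfectMatching

theorem eq_of_adj_imp {M N : G.Subgraph} (hM : M.IsPerfectMatching) (hN : N.IsPerfectMatching)
    (h : ∀ ⦃x y⦄, M.Adj x y → N.Adj x y) : M = N := by
  refine Subgraph.ext (hM.2.verts_eq_univ.trans hN.2.verts_eq_univ.symm)
    (funext₂ fun x y => propext ⟨@h x y, fun hxy => ?_⟩)
  obtain ⟨z, hxz, -⟩ := isPerfectMatching_iff.1 hM x
  rwa [hN.1.eq_of_adj_left hxy (h hxz)]

theorem adj_of_neighborSet_eq_singleton {M : G.Subgraph} (hM : M.IsPerfectMatching)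
    (hu : G.neighborSet u = {w}) : M.Adj u w := by
  obtain ⟨x, hx, -⟩ := isPerfectMatching_iff.1 hM u
  have hxw : x ∈ G.neighborSet u := M.adj_sub hx
  rw [hu, Set.mem_singleton_iff] at hxw
  rwa [hxw] at hx

theorem comap_induce_compl_pair {M : G.Subgraph} (hM : M.IsPerfectMatching)
    (hu : G.neighborSet u = {w}) :
    (M.comap (Embedding.induce ({u, w} : Set V)ᶜ).toHom).IsPerfectMatching := by
  have huw := hM.adj_of_neighborSet_eq_singleton hu
  refine isPerfectMatching_iff.2 fun ⟨v, hv⟩ => ?_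
  obtain ⟨x, hvx, hx⟩ := isPerfectMatching_iff.1 hM v
  have hxs : x ∈ ({u, w} : Set V)ᶜ := by
    rintro (rfl | rfl)
    · exact hv (.inr (hM.1.eq_of_adj_left huw hvx.symm).symm)
    · exact hv (.inl (hM.1.eq_of_adj_right huw hvx).symm)
  exact ⟨⟨x, hxs⟩, ⟨M.adj_sub hvx, hvx⟩, fun y hy => Subtype.ext (hx y hy.2)⟩

theorem map_induce_compl_pair_sup {M : (G.induce ({u, w} : Set V)ᶜ).Subgraph}
    (hM : M.IsPerfectMatching) (huw : G.Adj u w) :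
    (M.map (Embedding.induce _).toHom ⊔ G.subgraphOfAdj huw).IsPerfectMatching := by
  refine isPerfectMatching_iff.2 fun v => ?_
  by_cases hv : v ∈ ({u, w} : Set V)ᶜ
  · obtain ⟨x, hvx, hx⟩ := isPerfectMatching_iff.1 hM ⟨v, hv⟩
    refine ⟨x, .inl ⟨_, _, hvx, rfl, rfl⟩, ?_⟩
    rintro y (⟨⟨a, ha⟩, b, hab, rfl, rfl⟩ | hy)
    · exact congrArg Subtype.val (hx b hab)
    · rw [subgraphOfAdj_adj, Sym2.eq_iff] at hy
      rcases hy with ⟨rfl, -⟩ | ⟨-, rfl⟩ <;> simp at hv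
  · have hadj (y : V) : (M.map (Embedding.induce _).toHom ⊔ G.subgraphOfAdj huw).Adj v y ↔
        s(u, w) = s(v, y) :=
      or_iff_right fun ⟨⟨_, ha⟩, _, _, hav, _⟩ => hv (hav ▸ ha)
    simp only [hadj, Sym2.eq_iff]
    rw [Set.mem_compl_iff, not_not] at hv
    rcases hv with rfl | rfl
    · refine ⟨w, .inl ⟨rfl, rfl⟩, ?_⟩
      rintro y (⟨-, rfl⟩ | ⟨-, h⟩)
      · rfl
      · exact (huw.ne h.symm).elim
    · refine ⟨u, .inr ⟨rfl, rfl⟩, ?_⟩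
      rintro y (⟨h, -⟩ | ⟨rfl, -⟩)
      · exact (huw.ne h).elim
      · rfl

end Subgraph.IsPerfectMatching

theorem existsUnique_isPerfectMatching_iff_induce_compl_pair (hu : G.neighborSet u = {w}) :
    (∃! M : G.Subgraph, M.IsPerfectMatching) ↔
      ∃! M : (G.induce ({u, w} : Set V)ᶜ).Subgraph, M.IsPerfectMatching := by
  have huw := adj_of_neighborSet_eq_singleton hu
  refine Equiv.existsUnique_subtype_congr
    { toFun M := ⟨_, M.2.comap_induce_compl_pair hu⟩
      invFun M := ⟨_, M.2.map_induce_compl_pair_sup huw⟩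
      left_inv := fun ⟨M, hM⟩ => Subtype.ext ?_
      right_inv := fun ⟨M, hM⟩ => Subtype.ext ?_ }
  · refine ((hM.comap_induce_compl_pair hu).map_induce_compl_pair_sup huw).eq_of_adj_imp hM ?_
    rintro x y (⟨a, b, hab, rfl, rfl⟩ | hxy)
    · exact hab.2
    · rw [subgraphOfAdj_adj, Sym2.eq_iff] at hxy
      rcases hxy with ⟨rfl, rfl⟩ | ⟨rfl, rfl⟩
      · exact hM.adj_of_neighborSet_eq_singleton hu
      · exact (hM.adj_of_neighborSet_eq_singleton hu).symm
  · exact (hM.eq_of_adj_imp ((hM.map_induce_compl_pair_sup huw).comap_induce_compl_pair hu)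
      fun x y hxy => ⟨M.adj_sub hxy, .inl ⟨x, y, hxy, rfl, rfl⟩⟩).symm

theorem existsUnique_isPerfectMatching_of_isEmpty [IsEmpty V] :
    ∃! M : G.Subgraph, M.IsPerfectMatching :=
  ⟨⊤, Subgraph.isPerfectMatching_iff.2 isEmptyElim,
    fun _ _ => Subgraph.ext (Subsingleton.elim _ _) (funext isEmptyElim)⟩

end Pendant

end SimpleGraph

theorem IsCograph.exists_neighborSet_eq_singleton [Finite V] [Nonempty V] (hG : IsCograph G)
    (h : ∃! M : G.Subgraph, M.IsPerfectMatching) : ∃ u w, G.neighborSet u = {w} := by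
  obtain ⟨σ, hσ, huniq⟩ := existsUnique_isPairing_of_existsUnique_isPerfectMatching h
  obtain ⟨v, hv⟩ := (hσ.isRigidPairing huniq).exists_neighborSet_eq_singleton hG
  exact ⟨v, σ v, hv⟩

section ForcesUPM

variable [Fintype V]

theorem forcesUPM_zero_iff {u : Fin 0 → V} : ForcesUPM G 0 u ↔ IsEmpty V := by
  simp [ForcesUPM, Fintype.card_eq_zero_iff, injective_of_subsingleton]

theorem forcesUPM_cons_iff {u₀ w₀ : V} (hu : G.neighborSet u₀ = {w₀})
    [Fintype ↥({u₀, w₀} : Set V)ᶜ] {k : ℕ} (u : Fin k → ↥({u₀, w₀} : Set V)ᶜ) :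
    ForcesUPM G (k + 1) (Fin.cons u₀ (Subtype.val ∘ u)) ↔
      ForcesUPM (G.induce ({u₀, w₀} : Set V)ᶜ) k u := by
  have hN₀ : insert u₀ (G.neighborSet u₀) = {u₀, w₀} := by rw [hu]
  have hu₀ : u₀ ∉ Set.range (Subtype.val ∘ u) := fun ⟨i, hi⟩ => (u i).2 (.inl hi)
  have hus (i : Fin k) : (u i : V) ∉ ({u₀, w₀} : Set V) := (u i).2
  have hdeg₀ : ∃! w, G.Adj u₀ w := by simp [← mem_neighborSet, hu]
  have hcard : Fintype.card V = 2 * (k + 1) ↔ Fintype.card ↥({u₀, w₀} : Set V)ᶜ = 2 * k := by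
    have := card_compl_pair_add_two (adj_of_neighborSet_eq_singleton hu).ne
    omega
  unfold ForcesUPM
  simp only [Fin.cons_injective_iff, Subtype.val_injective.of_comp_iff, Fin.forall_fin_succ,
    Fin.cons_zero, Fin.cons_succ, Fin.not_lt_zero, Fin.succ_pos, Fin.succ_lt_succ_iff, hN₀,
    hu₀, hus, hdeg₀, hcard, not_false_eq_true, true_implies, false_implies, implies_true,
    true_and, comp_apply, ← mem_insert_neighborSet_induce, comap_adj,
    Function.Embedding.coe_subtype]
  refine and_congr_right' (and_congr_right' (forall_congr' fun i => ?_))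
  simp only [and_assoc]
  exact and_congr_right' existsUnique_subtype_iff.symm

theorem ForcesUPM.exists_neighborSet_eq_singleton {k : ℕ} {u : Fin (k + 1) → V}
    (h : ForcesUPM G (k + 1) u) : ∃ w, G.neighborSet (u 0) = {w} := by
  obtain ⟨w, ⟨-, hw⟩, huniq⟩ := (h.2.2 0).2
  exact ⟨w, Set.eq_singleton_iff_unique_mem.2
    ⟨hw, fun y hy => huniq y ⟨fun j hj => (Fin.not_lt_zero j hj).elim, hy⟩⟩⟩

theorem ForcesUPM.existsUnique_isPerfectMatching {k : ℕ} {u : Fin k → V}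
    (h : ForcesUPM G k u) : ∃! M : G.Subgraph, M.IsPerfectMatching := by
  induction k generalizing V with
  | zero =>
    have := forcesUPM_zero_iff.1 h
    exact existsUnique_isPerfectMatching_of_isEmpty
  | succ k ih =>
    obtain ⟨w₀, hu⟩ := h.exists_neighborSet_eq_singleton
    have hus (i : Fin k) : u i.succ ∈ ({u 0, w₀} : Set V)ᶜ := by
      simpa [hu] using (h.2.2 i.succ).1 0 i.succ_pos
    classical
    rw [← Fin.cons_self_tail u] at h
    rw [existsUnique_isPerfectMatching_iff_induce_compl_pair hu]
    exact ih ((forcesUPM_cons_iff hu fun i => ⟨u i.succ, hus i⟩).1 h)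

theorem IsCograph.exists_forcesUPM (hG : IsCograph G)
    (h : ∃! M : G.Subgraph, M.IsPerfectMatching) : ∃ k u, ForcesUPM G k u := by
  induction hn : Fintype.card V using Nat.strong_induction_on generalizing V with
  | _ n ih =>
  cases isEmpty_or_nonempty V
  · exact ⟨0, finZeroElim, forcesUPM_zero_iff.2 ‹_›⟩
  · obtain ⟨u₀, w₀, hu⟩ := hG.exists_neighborSet_eq_singleton h
    classical
    have hcard := card_compl_pair_add_two (adj_of_neighborSet_eq_singleton hu).ne
    obtain ⟨k, u, hF⟩ := ih _ (by omega) (hG.induce _)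
      ((existsUnique_isPerfectMatching_iff_induce_compl_pair hu).1 h) rfl
    exact ⟨k + 1, _, (forcesUPM_cons_iff hu u).2 hF⟩

end ForcesUPM

end

theorem cograph_unique_pm_iff_forces {V : Type*} [Fintype V] (G : SimpleGraph V)
    (hG : IsCograph G) :
    (∃! M : G.Subgraph, M.IsPerfectMatching) ↔
      ∃ (k : ℕ) (u : Fin k → V), ForcesUPM G k u :=
  ⟨hG.exists_forcesUPM, fun ⟨_, _, h⟩ => h.existsUnique_isPerfectMatching⟩
end

section
/- Every connected split graph of order at least 4 that has a unique perfect matching contains a vertex of degree 1. -/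
/-!
If `M` is the unique perfect matching of a graph, there is no `M`-alternating cycle, since
taking the symmetric difference with one yields a second perfect matching. Suppose a split graph
`G` with independent set `S` and clique `C` has a unique perfect matching and minimum degree at
least two. Every `s ∈ S` then has a neighbour `c ∈ C` other than its partner, and the partner of
`c` lies in `S` again: otherwise `s`, its partner, the partner of `c` and `c` form an alternating
4-cycle through the clique. Following `s ↦ c ↦ partner of c` inside the finite set `S` eventually
closes up into an alternating cycle, a contradiction.
-/

/-- A split graph is a graph whose vertex set can be partitioned into an
independent set `S` and a clique `C`. -/
def IsSplitGraph {V : Type*} (G : SimpleGraph V) : Prop :=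
  ∃ S C : Set V, Disjoint S C ∧ S ∪ C = Set.univ ∧
    (∀ a ∈ S, ∀ b ∈ S, ¬ G.Adj a b) ∧ G.IsClique C

open Set
open scoped symmDiff

lemma Set.exists_subset_nonempty_bijOn {α : Type*} [Finite α] {f : α → α} {s : Set α}
    (hs : s.Nonempty) (hf : MapsTo f s s) : ∃ t ⊆ s, t.Nonempty ∧ BijOn f t t := by
  obtain ⟨t, hts, hmin⟩ :=
    exists_minimal_le_of_wellFoundedLT (fun t : Set α ↦ t.Nonempty ∧ MapsTo f t t) s ⟨hs, hf⟩
  obtain ⟨htne, hft⟩ := hmin.prop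
  have himage : f '' t = t :=
    hmin.eq_of_subset ⟨htne.image f, fun _ hy ↦ mem_image_of_mem f (hft.image_subset hy)⟩
      hft.image_subset
  exact ⟨t, hts, htne, (t.toFinite.surjOn_iff_bijOn_of_mapsTo hft).mp himage.symm.subset⟩

namespace SimpleGraph

variable {V : Type*} {G : SimpleGraph V}

section Pair

variable {G' H : SimpleGraph V}
  (h : ∀ v, (G'.neighborSet v).Nonempty →
    ∃ a b, G'.neighborSet v = {a, b} ∧ H.Adj v a ∧ ¬ H.Adj v b)
include h

lemma isCycles_of_forall_neighborSet_eq_pair : G'.IsCycles := fun v hv ↦ by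
  obtain ⟨a, b, hv, ha, hb⟩ := h v hv
  rw [hv, ncard_pair fun hab ↦ hb (by rwa [← hab])]

lemma isAlternating_of_forall_neighborSet_eq_pair : G'.IsAlternating H := by
  intro v w w' hww' hw hw'
  obtain ⟨a, b, hv, ha, hb⟩ := h v ⟨w, hw⟩
  rw [← mem_neighborSet, hv] at hw hw'
  rcases hw with rfl | rfl <;> rcases hw' with rfl | rfl <;> tauto

end Pair

def zigzagGraph (P : Set V) (g f : V → V) : SimpleGraph V :=
  fromRel fun u v ↦ ∃ x ∈ P, (u = x ∧ v = g x) ∨ (u = g x ∧ v = f x)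

lemma zigzagGraph_adj {P : Set V} {g f : V → V} {u v : V} :
    (zigzagGraph P g f).Adj u v ↔ u ≠ v ∧ ∃ x ∈ P,
      (u = x ∧ v = g x) ∨ (u = g x ∧ v = f x) ∨ (v = x ∧ u = g x) ∨ (v = g x ∧ u = f x) := by
  simp only [zigzagGraph, fromRel_adj]
  grind

section zigzag

variable {M : G.Subgraph} {P : Set V} {g f : V → V}
  (hP : ∀ x ∈ P, ∀ y ∈ P, ¬ M.Adj x y) (hgf : ∀ x ∈ P, M.Adj (g x) (f x)) (hf : BijOn f P P)
include hP hgf hf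

lemma neighborSet_zigzagGraph_apply_f {x : V} (hx : x ∈ P) :
    (zigzagGraph P g f).neighborSet (f x) = {g x, g (f x)} := by
  have hgP : ∀ y ∈ P, g y ∉ P := fun y hy hgy ↦ hP _ hgy _ (hf.mapsTo hy) (hgf y hy)
  have hfx := hf.mapsTo hx
  ext w
  simp only [mem_neighborSet, zigzagGraph_adj, mem_insert_iff, mem_singleton_iff]
  constructor
  · rintro ⟨-, y, hy, ⟨rfl, rfl⟩ | ⟨h, -⟩ | ⟨-, h⟩ | ⟨rfl, h⟩⟩
    · exact .inr rfl
    · exact absurd (h ▸ hfx) (hgP y hy)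
    · exact absurd (h ▸ hfx) (hgP y hy)
    · exact .inl (by rw [hf.injOn hy hx h.symm])
  · rintro (rfl | rfl)
    · exact ⟨fun h ↦ hgP x hx (h ▸ hfx), x, hx, by tauto⟩
    · exact ⟨fun h ↦ hgP _ hfx (h ▸ hfx), f x, hfx, by tauto⟩

lemma neighborSet_zigzagGraph_apply_g (hM : M.IsMatching) {x : V} (hx : x ∈ P) :
    (zigzagGraph P g f).neighborSet (g x) = {f x, x} := by
  have hgP : ∀ y ∈ P, g y ∉ P := fun y hy hgy ↦ hP _ hgy _ (hf.mapsTo hy) (hgf y hy)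
  have hginj : InjOn g P := fun y hy z hz h ↦
    hf.injOn hy hz (hM.eq_of_adj_left (hgf y hy) (h ▸ hgf z hz))
  have hfx := hf.mapsTo hx
  ext w
  simp only [mem_neighborSet, zigzagGraph_adj, mem_insert_iff, mem_singleton_iff]
  constructor
  · rintro ⟨-, y, hy, ⟨h, -⟩ | ⟨h, rfl⟩ | ⟨rfl, h⟩ | ⟨-, h⟩⟩
    · exact absurd (h ▸ hy) (hgP x hx)
    · exact .inl (by rw [hginj hy hx h.symm])
    · exact .inr (hginj hy hx h.symm)
    · exact absurd (h ▸ hf.mapsTo hy) (hgP x hx)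
  · rintro (rfl | rfl)
    · exact ⟨fun h ↦ hgP x hx (h ▸ hfx), x, hx, by tauto⟩
    · exact ⟨fun h ↦ hgP w hx (h.symm ▸ hx), _, hx, by tauto⟩

end zigzag

lemma zigzagGraph_le {P : Set V} {g f : V → V} (hg : ∀ x ∈ P, G.Adj x (g x))
    (hgf : ∀ x ∈ P, G.Adj (g x) (f x)) : zigzagGraph P g f ≤ G := by
  intro u v huv
  obtain ⟨-, x, hx, ⟨rfl, rfl⟩ | ⟨rfl, rfl⟩ | ⟨rfl, rfl⟩ | ⟨rfl, rfl⟩⟩ := zigzagGraph_adj.mp huv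
  exacts [hg _ hx, hgf _ hx, (hg _ hx).symm, (hgf _ hx).symm]

namespace Subgraph

def IsAlternatingClosed (M : G.Subgraph) (T : Set V) : Prop :=
  (∀ x ∈ T, ∀ y ∈ T, ¬ M.Adj x y) ∧ ∀ x ∈ T, ∃ y, G.Adj x y ∧ ¬ M.Adj x y ∧ ∃ z ∈ T, M.Adj y z

namespace IsPerfectMatching

variable {M : G.Subgraph} (hM : M.IsPerfectMatching)
include hM

lemma exists_ne_of_isAlternating_of_isCycles {G' : SimpleGraph V} (hle : G' ≤ G)
    (halt : G'.IsAlternating M.spanningCoe) (hcyc : G'.IsCycles) (hne : G' ≠ ⊥) :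
    ∃ M' : G.Subgraph, M'.IsPerfectMatching ∧ M' ≠ M := by
  have hle' : M.spanningCoe ∆ G' ≤ G := symmDiff_le_sup.trans (sup_le M.spanningCoe_le hle)
  refine ⟨G.toSubgraph _ hle',
    (IsPerfectMatching.toSubgraph_iff _).mpr (hM.symmDiff_of_isAlternating halt hcyc),
    fun heq ↦ hne ?_⟩
  rw [← symmDiff_eq_left (a := M.spanningCoe)]
  exact congrArg Subgraph.spanningCoe heq

lemma exists_ne_of_isAlternatingClosed [Finite V] {T : Set V} (hT : M.IsAlternatingClosed T)
    (hne : T.Nonempty) : ∃ M' : G.Subgraph, M'.IsPerfectMatching ∧ M' ≠ M := by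
  choose! g hGg hMg f hfT hgf using hT.2
  obtain ⟨P, hPT, ⟨x₀, hx₀⟩, hf⟩ := exists_subset_nonempty_bijOn hne hfT
  have hP : ∀ x ∈ P, ∀ y ∈ P, ¬ M.Adj x y := fun x hx y hy ↦ hT.1 x (hPT hx) y (hPT hy)
  have hgf' : ∀ x ∈ P, M.Adj (g x) (f x) := fun x hx ↦ hgf x (hPT hx)
  have hpair : ∀ v, ((zigzagGraph P g f).neighborSet v).Nonempty →
      ∃ a b, (zigzagGraph P g f).neighborSet v = {a, b} ∧
        M.spanningCoe.Adj v a ∧ ¬ M.spanningCoe.Adj v b := by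
    rintro v ⟨w, hvw⟩
    obtain ⟨-, x, hx, h⟩ := zigzagGraph_adj.mp hvw
    have hv : v ∈ P ∨ v = g x := by
      rcases h with ⟨rfl, -⟩ | ⟨rfl, -⟩ | ⟨-, rfl⟩ | ⟨-, rfl⟩
      exacts [.inl hx, .inr rfl, .inr rfl, .inl (hf.mapsTo hx)]
    rcases hv with hv | rfl
    · obtain ⟨y, hy, rfl⟩ := hf.surjOn hv
      exact ⟨g y, g (f y), neighborSet_zigzagGraph_apply_f hP hgf' hf hy,
        (hgf' y hy).symm, hMg _ (hPT hv)⟩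
    · exact ⟨f x, x, neighborSet_zigzagGraph_apply_g hP hgf' hf hM.1 hx, hgf' x hx,
        fun h ↦ hMg x (hPT hx) h.symm⟩
  refine hM.exists_ne_of_isAlternating_of_isCycles
    (zigzagGraph_le (fun x hx ↦ hGg x (hPT hx)) fun x hx ↦ (hgf' x hx).adj_sub)
    (isAlternating_of_forall_neighborSet_eq_pair hpair)
    (isCycles_of_forall_neighborSet_eq_pair hpair) ?_
  exact ne_bot_iff_exists_adj.mpr
    ⟨x₀, g x₀, zigzagGraph_adj.mpr ⟨(hGg x₀ (hPT hx₀)).ne, x₀, hx₀, .inl ⟨rfl, rfl⟩⟩⟩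

lemma exists_ne_of_alternating_square [Finite V] {a b x y : V} (hab : M.Adj a b)
    (hxy : M.Adj x y) (hbx : G.Adj b x) (hya : G.Adj y a) (hax : a ≠ x) :
    ∃ M' : G.Subgraph, M'.IsPerfectMatching ∧ M' ≠ M := by
  have hay : ¬ M.Adj a y := fun h ↦
    hax (hM.1.eq_of_adj_right hab (hM.1.eq_of_adj_left h hab ▸ hxy))
  have hxb : ¬ M.Adj x b := fun h ↦ hay (hM.1.eq_of_adj_left h hxy ▸ hab)
  refine hM.exists_ne_of_isAlternatingClosed (T := {a, x}) ⟨?_, ?_⟩ ⟨a, mem_insert a _⟩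
  · simp only [mem_insert_iff, mem_singleton_iff]
    rintro u (rfl | rfl) v (rfl | rfl) h
    · exact h.ne rfl
    · exact hbx.ne (hM.1.eq_of_adj_left hab h)
    · exact hya.ne (hM.1.eq_of_adj_left hxy h)
    · exact h.ne rfl
  · simp only [mem_insert_iff, mem_singleton_iff]
    rintro u (rfl | rfl)
    · exact ⟨y, hya.symm, hay, x, .inr rfl, hxy.symm⟩
    · exact ⟨b, hbx.symm, hxb, a, .inl rfl, hab.symm⟩

lemma exists_adj_not_adj_of_degree_ne_one {v : V} [Fintype (G.neighborSet v)]
    (hv : G.degree v ≠ 1) : ∃ w, G.Adj v w ∧ ¬ M.Adj v w := by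
  obtain ⟨u, hu, -⟩ := hM.1 (hM.2 v)
  have hpos := (G.degree_pos_iff_exists_adj v).mpr ⟨u, hu.adj_sub⟩
  obtain ⟨w, hw, hwu⟩ := Finset.exists_mem_ne (s := G.neighborFinset v) (by
    rw [card_neighborFinset_eq_degree]; omega) u
  exact ⟨w, (mem_neighborFinset G v w).mp hw, fun h ↦ hwu (hM.1.eq_of_adj_left h hu)⟩

end IsPerfectMatching

end Subgraph

end SimpleGraph

lemma IsSplitGraph.exists_nonempty_independent_union_clique {V : Type*} [Nonempty V]
    {G : SimpleGraph V} (h : IsSplitGraph G) : ∃ S C : Set V, S.Nonempty ∧ S ∪ C = univ ∧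
      (∀ a ∈ S, ∀ b ∈ S, ¬ G.Adj a b) ∧ G.IsClique C := by
  obtain ⟨S, C, -, hSC, hS, hC⟩ := h
  rcases S.eq_empty_or_nonempty with rfl | hne
  · obtain ⟨v⟩ := ‹Nonempty V›
    refine ⟨{v}, C, singleton_nonempty v, ?_, by simp, hC⟩
    rw [empty_union] at hSC
    rw [hSC, union_univ]
  · exact ⟨S, C, hne, hSC, hS, hC⟩

theorem connected_split_unique_pm_degree_one_general {V : Type*} [Fintype V]
    (G : SimpleGraph V) [DecidableRel G.Adj]
    (hsplit : IsSplitGraph G) (hconn : G.Connected)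
    (hupm : ∃! M : G.Subgraph, M.IsPerfectMatching) :
    ∃ v : V, G.degree v = 1 := by
  obtain ⟨M, hM, huniq⟩ := hupm
  have : Nonempty V := hconn.nonempty
  obtain ⟨S, C, hSne, hSC, hS, hC⟩ := hsplit.exists_nonempty_independent_union_clique
  have hmemC : ∀ v ∉ S, v ∈ C := fun v hv ↦ (hSC ▸ mem_univ v : v ∈ S ∪ C).resolve_left hv
  by_contra! hdeg
  suffices M.IsAlternatingClosed S by
    obtain ⟨M', hM', hne⟩ := hM.exists_ne_of_isAlternatingClosed this hSne
    exact hne (huniq M' hM')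
  refine ⟨fun x hx y hy h ↦ hS x hx y hy h.adj_sub, fun s hs ↦ ?_⟩
  obtain ⟨y, hsy, hMsy⟩ := hM.exists_adj_not_adj_of_degree_ne_one (hdeg s)
  obtain ⟨z, hyz, -⟩ := hM.1 (hM.2 y)
  refine ⟨y, hsy, hMsy, z, ?_, hyz⟩
  by_contra hzS
  obtain ⟨b, hsb, -⟩ := hM.1 (hM.2 s)
  have hbz : b ≠ z := fun h ↦ hsy.ne (hM.1.eq_of_adj_right hsb (by rwa [h]))
  obtain ⟨M', hM', hne⟩ := hM.exists_ne_of_alternating_square hsb hyz.symm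
    (hC (hmemC b fun hb ↦ hS s hs b hb hsb.adj_sub) (hmemC z hzS) hbz) hsy.symm
    (ne_of_mem_of_not_mem hs hzS)
  exact hne (huniq M' hM')

theorem connected_split_unique_pm_degree_one {V : Type*} [Fintype V]
    [DecidableEq V] (G : SimpleGraph V) [DecidableRel G.Adj]
    (hsplit : IsSplitGraph G) (hconn : G.Connected) (hcard : 4 ≤ Fintype.card V)
    (hupm : ∃! M : G.Subgraph, M.IsPerfectMatching) :
    ∃ v : V, G.degree v = 1 :=
  connected_split_unique_pm_degree_one_general G hsplit hconn hupm
end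

section
/- Let G be a finite simple graph with a unique perfect matching M, let v be a universal vertex of G (a vertex adjacent to all other vertices), and let u be the vertex with uv ∈ M. Then u has degree 1 in G, i.e., v is the only neighbor of u. -/
/-!
If `u` had a neighbour `w ≠ v`, let `w'` be the partner of `w` in `M`. Since `v` is universal,
`vw'` is an edge of `G`, so exchanging the matching edges `uv`, `ww'` for `uw`, `vw'` (an
alternating 4-cycle) gives a second perfect matching.
-/

namespace SimpleGraph.Subgraph

variable {V : Type*} {G : SimpleGraph V} {M : G.Subgraph}

lemma IsMatching.deleteVerts {S : Set V} (hM : M.IsMatching)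
    (hS : ∀ ⦃x y⦄, M.Adj x y → x ∈ S → y ∈ S) : (M.deleteVerts S).IsMatching := by
  rintro x ⟨hx, hxS⟩
  obtain ⟨y, hxy, hy⟩ := hM hx
  refine ⟨y, deleteVerts_adj.mpr ⟨hx, hxS, M.edge_vert hxy.symm, fun hyS ↦ hxS (hS hxy.symm hyS),
    hxy⟩, fun z hz ↦ hy z (deleteVerts_adj.mp hz).2.2.2.2⟩

lemma IsPerfectMatching.exists_isPerfectMatching_adj (hM : M.IsPerfectMatching) {a b c d : V}
    (hab : M.Adj a b) (hcd : M.Adj c d) (hbc : b ≠ c) (hac : G.Adj a c) (hbd : G.Adj b d) :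
    ∃ M' : G.Subgraph, M'.IsPerfectMatching ∧ M'.Adj a c := by
  have had : a ≠ d := by
    rintro rfl
    exact hbc (hM.1.eq_of_adj_right hab.symm hcd)
  have hclosed : ∀ ⦃x y⦄, M.Adj x y → x ∈ ({a, b, c, d} : Set V) → y ∈ ({a, b, c, d} : Set V) := by
    rintro x y hxy (rfl | rfl | rfl | rfl)
    · simp [hM.1.eq_of_adj_left hxy hab]
    · simp [hM.1.eq_of_adj_left hxy hab.symm]
    · simp [hM.1.eq_of_adj_left hxy hcd]
    · simp [hM.1.eq_of_adj_left hxy hcd.symm]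
  set swap := G.subgraphOfAdj hac ⊔ G.subgraphOfAdj hbd
  have hswap : swap.IsMatching :=
    (IsMatching.subgraphOfAdj hac).sup (IsMatching.subgraphOfAdj hbd) <| by
      simp [hab.ne.symm, had.symm, hbc, hcd.ne.symm]
  have hswap_verts : swap.verts = {a, b, c, d} := by
    simp only [swap, verts_sup, subgraphOfAdj_verts]
    grind
  refine ⟨M.deleteVerts {a, b, c, d} ⊔ swap, ⟨(hM.1.deleteVerts hclosed).sup hswap ?_, ?_⟩,
    .inr (.inl (by simp))⟩
  · refine Set.disjoint_of_subset (support_subset_verts _) (support_subset_verts _) ?_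
    rw [deleteVerts_verts, hswap_verts]
    exact Set.disjoint_sdiff_left
  · intro x
    rw [verts_sup, deleteVerts_verts, hswap_verts, hM.2.verts_eq_univ, Set.sdiff_union_self]
    exact .inl (Set.mem_univ x)

end SimpleGraph.Subgraph

theorem universal_vertex_matched_to_degree_one_general {V : Type*}
    (G : SimpleGraph V) (M : G.Subgraph) (hM : M.IsPerfectMatching)
    (huniq : ∀ M' : G.Subgraph, M'.IsPerfectMatching → M' = M)
    (v : V) (hv : ∀ w : V, w ≠ v → G.Adj v w)
    (u : V) (huv : M.Adj u v) :
    ∀ w : V, G.Adj u w → w = v := by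
  intro w huw
  by_contra hwv
  obtain ⟨w', hww', -⟩ := hM.1 (hM.2 w)
  have hw'v : w' ≠ v := by
    rintro rfl
    exact huw.ne (hM.1.eq_of_adj_right huv hww')
  obtain ⟨M', hM', huw'⟩ :=
    hM.exists_isPerfectMatching_adj huv hww' (Ne.symm hwv) huw (hv w' hw'v)
  exact hwv (hM.1.eq_of_adj_left (huniq M' hM' ▸ huw') huv)

theorem universal_vertex_matched_to_degree_one {V : Type*} [Fintype V]
    (G : SimpleGraph V) (M : G.Subgraph) (hM : M.IsPerfectMatching)
    (huniq : ∀ M' : G.Subgraph, M'.IsPerfectMatching → M' = M)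
    (v : V) (hv : ∀ w : V, w ≠ v → G.Adj v w)
    (u : V) (huv : M.Adj u v) :
    ∀ w : V, G.Adj u w → w = v :=
  universal_vertex_matched_to_degree_one_general G M hM huniq v hv u huv
end

section
/- Let G be a finite simple graph with a unique perfect matching M, and suppose ( [ℓ_u, r_u] )_{u ∈ V(G)} is an interval representation of G in which all 2n(G) endpoints ℓ_u, r_u (u ∈ V(G)) are pairwise distinct real numbers. Let u* ∈ V(G) satisfy r_{u*} = min{ r_u : u ∈ V(G) } and let v* ∈ N_G(u*) satisfy r_{v*} = min{ r_v : v ∈ N_G(u*) }. Then the edge u*v* belongs to M. -/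
/-!
Suppose `u*v*` is not in `M`, and let `w`, `x` be the `M`-partners of `u*` and `v*`. The interval
of `w` meets that of `u*`, hence starts before `r_{u*} ≤ r_x`; the interval of `x` meets that of
`v*`, hence starts before `r_{v*} ≤ r_w` since `w ∈ N(u*)`. So `w` and `x` are adjacent, and
exchanging the edges `u*w`, `v*x` of `M` for `u*v*`, `wx` gives a second perfect matching.
-/

namespace SimpleGraph.Subgraph

variable {V : Type*} {G : SimpleGraph V} {M : G.Subgraph}

theorem IsPerfectMatching.toSubgraph_comap (hM : M.IsPerfectMatching) (σ : V ≃ V)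
    (h : M.spanningCoe.comap σ ≤ G) : (G.toSubgraph _ h).IsPerfectMatching := by
  rw [isPerfectMatching_iff]
  intro a
  obtain ⟨b, hab, hb⟩ := isPerfectMatching_iff.1 hM (σ a)
  exact ⟨σ.symm b, by simpa using hab, fun c hc => σ.eq_symm_apply.2 (hb _ hc)⟩

/-- Conjugating the partner involution of `M` by the transposition of `v` and `w` exchanges the
edges `uw`, `vx` for `uv`, `wx`. -/
theorem IsMatching.comap_swap_le [DecidableEq V] (hM : M.IsMatching) {u v w x : V}
    (huw : M.Adj u w) (hvx : M.Adj v x) (huv : G.Adj u v) (hwx : G.Adj w x) :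
    M.spanningCoe.comap (Equiv.swap v w) ≤ G := by
  have hu : Equiv.swap v w u = u := Equiv.swap_apply_of_ne_of_ne huv.ne huw.ne
  have hx : Equiv.swap v w x = x := Equiv.swap_apply_of_ne_of_ne hvx.ne.symm hwx.ne.symm
  have key : ∀ a b, M.Adj (Equiv.swap v w a) (Equiv.swap v w b) → a = v ∨ a = w → G.Adj a b := by
    rintro a b hab (rfl | rfl)
    · rw [Equiv.swap_apply_left] at hab
      rw [Equiv.swap_apply_eq_iff.1 (hM.eq_of_adj_left hab huw.symm), hu]
      exact huv.symm
    · rw [Equiv.swap_apply_right] at hab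
      rw [Equiv.swap_apply_eq_iff.1 (hM.eq_of_adj_left hab hvx), hx]
      exact hwx
  intro a b hab
  rw [SimpleGraph.comap_adj, spanningCoe_adj] at hab
  by_cases ha : a = v ∨ a = w
  · exact key a b hab ha
  by_cases hb : b = v ∨ b = w
  · exact (key b a hab.symm hb).symm
  rw [not_or] at ha hb
  rw [Equiv.swap_apply_of_ne_of_ne ha.1 ha.2, Equiv.swap_apply_of_ne_of_ne hb.1 hb.2] at hab
  exact hab.adj_sub

theorem IsPerfectMatching.adj_of_forall_isPerfectMatching_eq (hM : M.IsPerfectMatching)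
    (huniq : ∀ M' : G.Subgraph, M'.IsPerfectMatching → M' = M) {u v w x : V}
    (huw : M.Adj u w) (hvx : M.Adj v x) (huv : G.Adj u v) (hwx : G.Adj w x) : M.Adj u v := by
  classical
  have hle := hM.1.comap_swap_le huw hvx huv hwx
  rw [← huniq _ (hM.toSubgraph_comap _ hle), toSubgraph_adj, SimpleGraph.comap_adj, spanningCoe_adj,
    Equiv.swap_apply_of_ne_of_ne huv.ne huw.ne, Equiv.swap_apply_left]
  exact huw

end SimpleGraph.Subgraph

theorem SimpleGraph.adj_of_adj_of_adj_of_min_right {V : Type*} {G : SimpleGraph V}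
    {l r : V → ℝ} (hrep : ∀ u v : V, u ≠ v → (G.Adj u v ↔ (l u ≤ r v ∧ l v ≤ r u)))
    {u v w x : V} (hu : ∀ y, r u ≤ r y) (hv : ∀ y, G.Adj u y → r v ≤ r y)
    (huw : G.Adj u w) (hvx : G.Adj v x) (hwx : w ≠ x) : G.Adj w x :=
  (hrep w x hwx).2
    ⟨((hrep u w huw.ne).1 huw).2.trans (hu x), ((hrep v x hvx.ne).1 hvx).2.trans (hv w huw)⟩

theorem interval_graph_unique_pm_first_edge_general {V : Type*}
    (G : SimpleGraph V) (M : G.Subgraph) (hM : M.IsPerfectMatching)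
    (huniq : ∀ M' : G.Subgraph, M'.IsPerfectMatching → M' = M)
    (l r : V → ℝ)
    (hrep : ∀ u v : V, u ≠ v → (G.Adj u v ↔ (l u ≤ r v ∧ l v ≤ r u)))
    (ustar vstar : V)
    (hustar : ∀ u : V, r ustar ≤ r u)
    (hadj : G.Adj ustar vstar)
    (hvstar : ∀ v : V, G.Adj ustar v → r vstar ≤ r v) :
    M.Adj ustar vstar := by
  obtain ⟨w, huw, -⟩ := hM.1 (hM.2 ustar)
  obtain ⟨x, hvx, -⟩ := hM.1 (hM.2 vstar)
  have hwx : w ≠ x := by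
    rintro rfl
    exact hadj.ne (hM.1.eq_of_adj_right huw hvx)
  exact hM.adj_of_forall_isPerfectMatching_eq huniq huw hvx hadj
    (G.adj_of_adj_of_adj_of_min_right hrep hustar hvstar huw.adj_sub hvx.adj_sub hwx)

theorem interval_graph_unique_pm_first_edge {V : Type*} [Fintype V]
    (G : SimpleGraph V) (M : G.Subgraph) (hM : M.IsPerfectMatching)
    (huniq : ∀ M' : G.Subgraph, M'.IsPerfectMatching → M' = M)
    (l r : V → ℝ) (hlr : ∀ u : V, l u ≤ r u)
    (hrep : ∀ u v : V, u ≠ v → (G.Adj u v ↔ (l u ≤ r v ∧ l v ≤ r u)))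
    (hdistinct : Function.Injective (Sum.elim l r : V ⊕ V → ℝ))
    (ustar vstar : V)
    (hustar : ∀ u : V, r ustar ≤ r u)
    (hadj : G.Adj ustar vstar)
    (hvstar : ∀ v : V, G.Adj ustar v → r vstar ≤ r v) :
    M.Adj ustar vstar :=
  interval_graph_unique_pm_first_edge_general G M hM huniq l r hrep ustar vstar hustar hadj hvstar
end

section
/- Every graph G in the class 𝒢 is connected, claw-free, and has a unique perfect matching. -/
/-- A graph is claw-free if it has no induced subgraph isomorphic to `K_{1,3}`. -/
def ClawFree {V : Type*} (G : SimpleGraph V) : Prop :=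
  ¬ ∃ a b c d : V, a ≠ b ∧ a ≠ c ∧ a ≠ d ∧ b ≠ c ∧ b ≠ d ∧ c ≠ d ∧
    G.Adj a b ∧ G.Adj a c ∧ G.Adj a d ∧ ¬ G.Adj b c ∧ ¬ G.Adj b d ∧ ¬ G.Adj c d

/-- Operation 1: add two new vertices `x = inr 0` and `y = inr 1`, and the three
new edges `xy`, `xu`, `yu`. -/
def AddOp1 {V : Type*} (G : SimpleGraph V) (u : V) : SimpleGraph (V ⊕ Fin 2) :=
  SimpleGraph.fromRel fun a b =>
    match a, b with
    | Sum.inl a, Sum.inl b => G.Adj a b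
    | Sum.inl a, Sum.inr _ => a = u
    | Sum.inr _, Sum.inr _ => True
    | _, _ => False

/-- Operation 2: add two new vertices `x = inr 0` and `y = inr 1`, the new edge `xy`,
and new edges between `x` and all vertices of `C`. -/
def AddOp2 {V : Type*} (G : SimpleGraph V) (C : Set V) : SimpleGraph (V ⊕ Fin 2) :=
  SimpleGraph.fromRel fun a b =>
    match a, b with
    | Sum.inl a, Sum.inl b => G.Adj a b
    | Sum.inl a, Sum.inr i => i = 0 ∧ a ∈ C
    | Sum.inr _, Sum.inr _ => True
    | _, _ => False

/-- The class `𝒢`: obtained from `K₂` by iteratively applying Operation 1 (at a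
simplicial vertex `u`) and Operation 2 (at a non-empty clique `C` such that
`N_G(u) \ C` is a clique for every `u ∈ C`), considered up to isomorphism. -/
inductive InClassG : ∀ (V : Type), SimpleGraph V → Prop
  | base : InClassG (Fin 2) ⊤
  | op1 {V : Type} (G : SimpleGraph V) (u : V)
      (hu : G.IsClique (G.neighborSet u)) :
      InClassG V G → InClassG (V ⊕ Fin 2) (AddOp1 G u)
  | op2 {V : Type} (G : SimpleGraph V) (C : Set V) (hne : C.Nonempty)
      (hC : G.IsClique C) (hnbr : ∀ u ∈ C, G.IsClique (G.neighborSet u \ C)) :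
      InClassG V G → InClassG (V ⊕ Fin 2) (AddOp2 G C)
  | iso {V W : Type} (G : SimpleGraph V) (H : SimpleGraph W) (e : G ≃g H) :
      InClassG V G → InClassG W H

/-!
Induction along the construction of `𝒢`, the three properties being invariant under
isomorphism. Both operations attach the new edge `xy` to a copy of `G` so that every perfect
matching must contain `xy` (after Operation 2 the vertex `y` is a leaf; after Operation 1, `x`
and `y` see only each other and `u`, so they cannot both be matched to `u`); perfect matchings
of the new graph are therefore those of `G` plus `xy`. For claw-freeness it suffices that the
neighbourhood of every vertex is covered by two cliques, or is that of a vertex of `G`: the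
hypotheses on `u` and on `C` are exactly what makes the neighbourhoods of `u` and of the
vertices of `C` split into two cliques once `x` is added.
-/

open SimpleGraph Sum

namespace SimpleGraph

variable {V W : Type*} {G : SimpleGraph V} {H : SimpleGraph W}

theorem IsClique.image_hom {s : Set V} (f : G →g H) (hs : G.IsClique s) :
    H.IsClique (f '' s) := by
  rintro _ ⟨a, ha, rfl⟩ _ ⟨b, hb, rfl⟩ hab
  exact f.map_adj (hs ha hb (ne_of_apply_ne f hab))

theorem Connected.of_hom_of_forall_reachable (f : G →g H) (hG : G.Connected)
    (h : ∀ w, ∃ v, H.Reachable w (f v)) : H.Connected := by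
  have : Nonempty W := ⟨f hG.nonempty.some⟩
  refine ⟨fun w w' => ?_⟩
  obtain ⟨v, hv⟩ := h w
  obtain ⟨v', hv'⟩ := h w'
  exact hv.trans (((hG.preconnected v v').map f).trans hv'.symm)

namespace Subgraph

variable {M M' : G.Subgraph}

theorem IsPerfectMatching.eq_of_le (hM : M.IsPerfectMatching) (hM' : M'.IsPerfectMatching)
    (hle : M ≤ M') : M = M' := by
  ext v w
  · simp [hM.2 v, hM'.2 v]
  · refine ⟨fun h => hle.2 h, fun h => ?_⟩
    obtain ⟨w', hw'⟩ := (hM.1 (hM.2 v)).exists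
    rwa [← hM'.1.eq_of_adj_left (hle.2 hw') h]

theorem IsPerfectMatching.adj_of_forall_adj_eq {v u : V} (hM : M.IsPerfectMatching)
    (h : ∀ w, G.Adj v w → w = u) : M.Adj v u := by
  obtain ⟨w, hw⟩ := (hM.1 (hM.2 v)).exists
  rwa [← h w (M.adj_sub hw)]

theorem IsPerfectMatching.adj_of_forall_adj_eq_or_eq {x y u : V} (hM : M.IsPerfectMatching)
    (hxy : x ≠ y) (hx : ∀ w, G.Adj x w → w = y ∨ w = u)
    (hy : ∀ w, G.Adj y w → w = x ∨ w = u) :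
    M.Adj x y := by
  obtain ⟨w, hw⟩ := (hM.1 (hM.2 x)).exists
  obtain ⟨z, hz⟩ := (hM.1 (hM.2 y)).exists
  rcases hx w (M.adj_sub hw) with rfl | rfl
  · exact hw
  rcases hy z (M.adj_sub hz) with rfl | rfl
  · exact hz.symm
  · exact absurd (hM.1.eq_of_adj_right hw hz) hxy

theorem IsPerfectMatching.map_iso (e : G ≃g H) (hM : M.IsPerfectMatching) :
    (M.map e.toHom).IsPerfectMatching :=
  ⟨(Iso.isMatching_map e).2 hM.1, fun w => ⟨e.symm w, hM.2 _, by simp⟩⟩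

end Subgraph

theorem Iso.existsUnique_isPerfectMatching (e : G ≃g H)
    (h : ∃! M : G.Subgraph, M.IsPerfectMatching) : ∃! M : H.Subgraph, M.IsPerfectMatching := by
  obtain ⟨M, hM, huniq⟩ := h
  refine ⟨M.map e.toHom, hM.map_iso e, fun M' hM' => ?_⟩
  rw [← huniq _ (hM'.map_iso e.symm), ← Subgraph.map_comp, Iso.toHom_comp_symm_toHom,
    Subgraph.map_id]

end SimpleGraph

def ClawFreeAt {V : Type*} (G : SimpleGraph V) (a : V) : Prop :=
  ∀ ⦃b c d⦄, G.Adj a b → G.Adj a c → G.Adj a d → b ≠ c → b ≠ d → c ≠ d →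
    G.Adj b c ∨ G.Adj b d ∨ G.Adj c d

section ClawFree

variable {V W : Type*} {G : SimpleGraph V} {H : SimpleGraph W}

theorem clawFree_iff_forall_clawFreeAt : ClawFree G ↔ ∀ a, ClawFreeAt G a := by
  constructor
  · intro h a b c d hb hc hd hbc hbd hcd
    by_contra! hn
    exact h ⟨a, b, c, d, hb.ne, hc.ne, hd.ne, hbc, hbd, hcd, hb, hc, hd, hn.1, hn.2.1, hn.2.2⟩
  · rintro h ⟨a, b, c, d, -, -, -, hbc, hbd, hcd, hb, hc, hd, nbc, nbd, ncd⟩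
    rcases h a hb hc hd hbc hbd hcd with h | h | h <;> contradiction

theorem clawFreeAt_of_neighborSet_subset_union {a : V} {s t : Set V} (hs : G.IsClique s)
    (ht : G.IsClique t) (h : G.neighborSet a ⊆ s ∪ t) : ClawFreeAt G a := by
  intro b c d hb hc hd hbc hbd hcd
  -- two of the three leaves lie in the same clique
  rcases h hb with hb | hb <;> rcases h hc with hc | hc <;> rcases h hd with hd | hd <;>
    first
    | exact .inl (hs hb hc hbc) | exact .inl (ht hb hc hbc)
    | exact .inr (.inl (hs hb hd hbd)) | exact .inr (.inl (ht hb hd hbd))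
    | exact .inr (.inr (hs hc hd hcd)) | exact .inr (.inr (ht hc hd hcd))

theorem ClawFreeAt.map {a : V} (f : G ↪g H) (ha : ClawFreeAt G a)
    (hN : H.neighborSet (f a) ⊆ Set.range f) : ClawFreeAt H (f a) := by
  intro b c d hb hc hd hbc hbd hcd
  obtain ⟨b, rfl⟩ := hN hb
  obtain ⟨c, rfl⟩ := hN hc
  obtain ⟨d, rfl⟩ := hN hd
  simp only [f.map_adj_iff, f.injective.ne_iff] at *
  exact ha hb hc hd hbc hbd hcd

theorem ClawFree.of_iso (e : G ≃g H) (h : ClawFree G) : ClawFree H := by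
  rw [clawFree_iff_forall_clawFreeAt] at h ⊢
  intro w
  rw [← e.apply_symm_apply w]
  exact (h _).map e.toEmbedding fun x _ => ⟨e.symm x, by simp⟩

theorem clawFree_top : ClawFree (⊤ : SimpleGraph V) :=
  clawFree_iff_forall_clawFreeAt.2 fun _ =>
    clawFreeAt_of_neighborSet_subset_union (isClique_univ.2 rfl) (isClique_univ.2 rfl)
      fun _ _ => .inl trivial

end ClawFree

namespace SimpleGraph

variable {V : Type*} {G : SimpleGraph V} {H : SimpleGraph (V ⊕ Fin 2)}

theorem Subgraph.IsMatching.not_adj_inl_inr {M : H.Subgraph} (hM : M.IsMatching)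
    (h01 : M.Adj (inr 0) (inr 1)) (a : V) (i : Fin 2) : ¬ M.Adj (inl a) (inr i) := by
  intro h
  fin_cases i
  · exact inl_ne_inr (hM.eq_of_adj_right h h01.symm)
  · exact inl_ne_inr (hM.eq_of_adj_right h h01)

variable (hG : ∀ a b, H.Adj (inl a) (inl b) ↔ G.Adj a b)
include hG

def inlEmbedding : G ↪g H := ⟨Function.Embedding.inl, hG _ _⟩

@[simp]
theorem inlEmbedding_apply (a : V) : inlEmbedding hG a = inl a := rfl

theorem Subgraph.IsPerfectMatching.comap_inl {M : H.Subgraph} (hM : M.IsPerfectMatching)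
    (hM01 : M.Adj (inr 0) (inr 1)) : (M.comap (inlEmbedding hG).toHom).IsPerfectMatching := by
  rw [Subgraph.isPerfectMatching_iff]
  intro a
  obtain ⟨w, hw, huniq⟩ := hM.1 (hM.2 (inl a))
  obtain b | i := w
  · exact ⟨b, ⟨(hG a b).1 (M.adj_sub hw), hw⟩, fun c hc => inl_injective (huniq _ hc.2)⟩
  · exact absurd hw (hM.1.not_adj_inl_inr hM01 a i)

variable (h01 : H.Adj (inr 0) (inr 1))
include h01

theorem connected_of_adj_inr_inl {v₀ : V} (hv₀ : H.Adj (inr 0) (inl v₀))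
    (hconn : G.Connected) : H.Connected := by
  refine hconn.of_hom_of_forall_reachable (inlEmbedding hG).toHom ?_
  rintro (a | i)
  · exact ⟨a, .rfl⟩
  · refine ⟨v₀, ?_⟩
    fin_cases i
    · exact hv₀.reachable
    · exact h01.symm.reachable.trans hv₀.reachable

theorem isPerfectMatching_map_inl_sup {M : G.Subgraph} (hM : M.IsPerfectMatching) :
    (M.map (inlEmbedding hG).toHom ⊔ H.subgraphOfAdj h01).IsPerfectMatching := by
  refine ⟨(hM.1.map _ (inlEmbedding hG).injective).sup (.subgraphOfAdj h01) ?_, ?_⟩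
  · rw [Set.disjoint_left]
    intro v hv hv'
    obtain ⟨a, -, rfl⟩ := Subgraph.support_subset_verts _ hv
    simpa using Subgraph.support_subset_verts _ hv'
  · rintro (a | i)
    · exact .inl ⟨a, hM.2 a, rfl⟩
    · right
      fin_cases i <;> simp

theorem existsUnique_isPerfectMatching_of_forall_adj_inr
    (hforced : ∀ M : H.Subgraph, M.IsPerfectMatching → M.Adj (inr 0) (inr 1))
    (hunique : ∃! M : G.Subgraph, M.IsPerfectMatching) :
    ∃! M : H.Subgraph, M.IsPerfectMatching := by
  refine existsUnique_of_exists_of_unique ?_ fun M₁ M₂ h₁ h₂ => ?_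
  · obtain ⟨M, hM, -⟩ := hunique
    exact ⟨_, isPerfectMatching_map_inl_sup hG h01 hM⟩
  have hcomap : M₁.comap (inlEmbedding hG).toHom = M₂.comap (inlEmbedding hG).toHom :=
    hunique.unique (h₁.comap_inl hG (hforced M₁ h₁)) (h₂.comap_inl hG (hforced M₂ h₂))
  refine h₁.eq_of_le h₂ ⟨fun v _ => h₂.2 v, ?_⟩
  rintro (a | i) (b | j) hM₁
  · have hab : (M₁.comap (inlEmbedding hG).toHom).Adj a b :=
      ⟨(hG a b).1 (M₁.adj_sub hM₁), hM₁⟩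
    exact (hcomap ▸ hab).2
  · exact absurd hM₁ (h₁.1.not_adj_inl_inr (hforced M₁ h₁) a j)
  · exact absurd hM₁.symm (h₁.1.not_adj_inl_inr (hforced M₁ h₁) b i)
  · have hij : i ≠ j := fun h => (M₁.adj_sub hM₁).ne (congrArg inr h)
    obtain ⟨rfl, rfl⟩ | ⟨rfl, rfl⟩ : (i = 0 ∧ j = 1) ∨ (i = 1 ∧ j = 0) := by omega
    · exact hforced M₂ h₂
    · exact (hforced M₂ h₂).symm

end SimpleGraph

section Operations

variable {V : Type*} {G : SimpleGraph V} {u : V} {C : Set V} {a b : V} {i j : Fin 2}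

@[simp] theorem addOp1_adj_inl_inl : (AddOp1 G u).Adj (inl a) (inl b) ↔ G.Adj a b := by
  simp only [AddOp1, fromRel_adj, ne_eq, inl.injEq]
  exact ⟨fun h => h.2.elim id .symm, fun h => ⟨h.ne, .inl h⟩⟩

@[simp] theorem addOp1_adj_inl_inr : (AddOp1 G u).Adj (inl a) (inr i) ↔ a = u := by
  simp [AddOp1]

@[simp] theorem addOp1_adj_inr_inl : (AddOp1 G u).Adj (inr i) (inl a) ↔ a = u := by
  simp [AddOp1]

@[simp] theorem addOp1_adj_inr_inr : (AddOp1 G u).Adj (inr i) (inr j) ↔ i ≠ j := by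
  simp [AddOp1]

@[simp] theorem addOp2_adj_inl_inl : (AddOp2 G C).Adj (inl a) (inl b) ↔ G.Adj a b := by
  simp only [AddOp2, fromRel_adj, ne_eq, inl.injEq]
  exact ⟨fun h => h.2.elim id .symm, fun h => ⟨h.ne, .inl h⟩⟩

@[simp] theorem addOp2_adj_inl_inr : (AddOp2 G C).Adj (inl a) (inr i) ↔ i = 0 ∧ a ∈ C := by
  simp [AddOp2]

@[simp] theorem addOp2_adj_inr_inl : (AddOp2 G C).Adj (inr i) (inl a) ↔ i = 0 ∧ a ∈ C := by
  simp [AddOp2]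

@[simp] theorem addOp2_adj_inr_inr : (AddOp2 G C).Adj (inr i) (inr j) ↔ i ≠ j := by
  simp [AddOp2]

theorem adj_inr_zero_inr_one_of_isPerfectMatching_addOp1 {M : (AddOp1 G u).Subgraph}
    (hM : M.IsPerfectMatching) : M.Adj (inr 0) (inr 1) := by
  have hnbr : ∀ i, ∀ w, (AddOp1 G u).Adj (inr i) w → w = inr (i + 1) ∨ w = inl u := by
    rintro i (b | j) h
    · exact .inr (congrArg inl (addOp1_adj_inr_inl.1 h))
    · exact .inl (congrArg inr (by simp at h; omega))
  exact hM.adj_of_forall_adj_eq_or_eq (by simp) (hnbr 0) (hnbr 1)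

theorem adj_inr_zero_inr_one_of_isPerfectMatching_addOp2 {M : (AddOp2 G C).Subgraph}
    (hM : M.IsPerfectMatching) : M.Adj (inr 0) (inr 1) := by
  refine (hM.adj_of_forall_adj_eq ?_).symm
  rintro (b | j) h
  · simp at h
  · exact congrArg inr (by simp at h; omega)

theorem ClawFree.addOp1 (hu : G.IsClique (G.neighborSet u)) (h : ClawFree G) :
    ClawFree (AddOp1 G u) := by
  rw [clawFree_iff_forall_clawFreeAt] at h ⊢
  rintro (a | i)
  · by_cases ha : a = u
    · subst ha
      refine clawFreeAt_of_neighborSet_subset_union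
        (hu.image_hom (inlEmbedding fun _ _ => addOp1_adj_inl_inl).toHom)
        (t := {inr 0, inr 1}) (isClique_pair.2 fun _ => by simp) ?_
      rintro (b | j) hb
      · exact .inl ⟨b, by simpa using hb, rfl⟩
      · fin_cases j <;> simp
    · refine (h a).map (inlEmbedding fun _ _ => addOp1_adj_inl_inl) ?_
      rintro (b | j) hb
      · exact ⟨b, rfl⟩
      · simp [ha] at hb
  · refine clawFreeAt_of_neighborSet_subset_union (isClique_singleton (inl u))
      (isClique_singleton (inr (i + 1))) ?_
    rintro (b | j) hb
    · exact .inl (congrArg inl (by simpa using hb))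
    · exact .inr (congrArg inr (by simp at hb; omega))

theorem ClawFree.addOp2 (hC : G.IsClique C) (hnbr : ∀ v ∈ C, G.IsClique (G.neighborSet v \ C))
    (h : ClawFree G) : ClawFree (AddOp2 G C) := by
  rw [clawFree_iff_forall_clawFreeAt] at h ⊢
  let f := inlEmbedding fun _ _ => (addOp2_adj_inl_inl (G := G) (C := C))
  rintro (a | i)
  · by_cases ha : a ∈ C
    · have hxC : (AddOp2 G C).IsClique (insert (inr 0) (f '' C)) :=
        (hC.image_hom f.toHom).insert fun _ ⟨c, hc, hcb⟩ _ => hcb ▸ by simpa [f] using hc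
      refine clawFreeAt_of_neighborSet_subset_union ((hnbr a ha).image_hom f.toHom) hxC ?_
      rintro (b | j) hb
      · by_cases hb' : b ∈ C
        · exact .inr (.inr ⟨b, hb', rfl⟩)
        · exact .inl ⟨b, ⟨by simpa using hb, hb'⟩, rfl⟩
      · exact .inr (.inl (by simp_all))
    · refine (h a).map f ?_
      rintro (b | j) hb
      · exact ⟨b, rfl⟩
      · simp [f, ha] at hb
  · refine clawFreeAt_of_neighborSet_subset_union (hC.image_hom f.toHom)
      (isClique_singleton (inr (i + 1))) ?_
    rintro (b | j) hb
    · exact .inl ⟨b, (by simpa using hb : i = 0 ∧ b ∈ C).2, rfl⟩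
    · exact .inr (congrArg inr (by simp at hb; omega))

end Operations

theorem existsUnique_isPerfectMatching_top_fin_two :
    ∃! M : (⊤ : SimpleGraph (Fin 2)).Subgraph, M.IsPerfectMatching := by
  have h01 : (⊤ : SimpleGraph (Fin 2)).Adj 0 1 := by simp
  refine existsUnique_of_exists_of_unique
    ⟨_, .subgraphOfAdj h01, fun v => by fin_cases v <;> simp⟩ fun M₁ M₂ h₁ h₂ => ?_
  refine h₁.eq_of_le h₂ ⟨fun v _ => h₂.2 v, fun v w hvw => h₂.adj_of_forall_adj_eq ?_⟩
  have := (M₁.adj_sub hvw).ne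
  intro x hx
  simp only [top_adj] at hx
  omega

theorem classG_connected_clawfree_unique_pm_general (V : Type)
    (G : SimpleGraph V) (hG : InClassG V G) :
    G.Connected ∧ ClawFree G ∧ ∃! M : G.Subgraph, M.IsPerfectMatching := by
  induction hG with
  | base => exact ⟨connected_top, clawFree_top, existsUnique_isPerfectMatching_top_fin_two⟩
  | op1 G u hu _ ih =>
    obtain ⟨hconn, hclaw, hpm⟩ := ih
    have hG : ∀ a b, (AddOp1 G u).Adj (inl a) (inl b) ↔ G.Adj a b :=
      fun _ _ => addOp1_adj_inl_inl
    have h01 : (AddOp1 G u).Adj (inr 0) (inr 1) := by simp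
    exact ⟨connected_of_adj_inr_inl hG h01 (v₀ := u) (by simp) hconn, hclaw.addOp1 hu,
      existsUnique_isPerfectMatching_of_forall_adj_inr hG h01
        (fun _ => adj_inr_zero_inr_one_of_isPerfectMatching_addOp1) hpm⟩
  | op2 G C hne hC hnbr _ ih =>
    obtain ⟨hconn, hclaw, hpm⟩ := ih
    obtain ⟨v₀, hv₀⟩ := hne
    have hG : ∀ a b, (AddOp2 G C).Adj (inl a) (inl b) ↔ G.Adj a b :=
      fun _ _ => addOp2_adj_inl_inl
    have h01 : (AddOp2 G C).Adj (inr 0) (inr 1) := by simp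
    exact ⟨connected_of_adj_inr_inl hG h01 (v₀ := v₀) (by simpa using hv₀) hconn,
      hclaw.addOp2 hC hnbr,
      existsUnique_isPerfectMatching_of_forall_adj_inr hG h01
        (fun _ => adj_inr_zero_inr_one_of_isPerfectMatching_addOp2) hpm⟩
  | iso G H e _ ih =>
    obtain ⟨hconn, hclaw, hpm⟩ := ih
    exact ⟨e.connected_iff.1 hconn, hclaw.of_iso e, e.existsUnique_isPerfectMatching hpm⟩

theorem classG_connected_clawfree_unique_pm (V : Type) [Fintype V]
    (G : SimpleGraph V) (hG : InClassG V G) :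
    G.Connected ∧ ClawFree G ∧ ∃! M : G.Subgraph, M.IsPerfectMatching :=
  classG_connected_clawfree_unique_pm_general V G hG
end
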